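/- For a nontrivial real Banach space X: X has the diameter 2 property if and only if the dual X* is weakly octahedral. -/

import Mathlib

open Metric Set

noncomputable section

/-- A slice of the closed unit ball determined by `f ∈ S_{X*}` and `α > 0` is
`{x ∈ B_X : f x > 1 - α}`.  `X` has the local diameter 2 property if every slice
of `B_X` has diameter 2. -/
def LocalDiameterTwoProp (X : Type*) [NormedAddCommGroup X] [NormedSpace ℝ X] : Prop :=
  ∀ f : X →L[ℝ] ℝ, ‖f‖ = 1 → ∀ α : ℝ, 0 < α →
    Metric.diam {x : X | ‖x‖ ≤ 1 ∧ 1 - α < f x} = 2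

/-- `X` has the diameter 2 property if every nonempty relatively weakly open
subset of `B_X` has diameter 2. -/
def DiameterTwoProp (X : Type*) [NormedAddCommGroup X] [NormedSpace ℝ X] : Prop :=
  ∀ U : Set (WeakSpace ℝ X), IsOpen U →
    {x : X | ‖x‖ ≤ 1 ∧ toWeakSpace ℝ X x ∈ U}.Nonempty →
    Metric.diam {x : X | ‖x‖ ≤ 1 ∧ toWeakSpace ℝ X x ∈ U} = 2

/-- `X` has the strong diameter 2 property if every convex combination of slices
of `B_X` has diameter 2. -/
def StrongDiameterTwoProp (X : Type*) [NormedAddCommGroup X] [NormedSpace ℝ X] : Prop :=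
  ∀ (n : ℕ) (lam : Fin n → ℝ) (f : Fin n → X →L[ℝ] ℝ) (α : Fin n → ℝ),
    (∀ i, 0 ≤ lam i) → (∑ i, lam i) = 1 → (∀ i, ‖f i‖ = 1) → (∀ i, 0 < α i) →
    Metric.diam {x : X | ∃ g : Fin n → X,
      (∀ i, ‖g i‖ ≤ 1 ∧ 1 - α i < f i (g i)) ∧ x = ∑ i, lam i • g i} = 2

/-- The dual of `X` has the weak* local diameter 2 property if every weak* slice
`{f ∈ B_{X*} : f x > 1 - α}` (with `x ∈ S_X`, `α > 0`) has diameter 2. -/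
def WStarLocalDiameterTwoProp (X : Type*) [NormedAddCommGroup X] [NormedSpace ℝ X] : Prop :=
  ∀ x : X, ‖x‖ = 1 → ∀ α : ℝ, 0 < α →
    Metric.diam {f : X →L[ℝ] ℝ | ‖f‖ ≤ 1 ∧ 1 - α < f x} = 2

/-- The dual of `X` has the weak* diameter 2 property if every nonempty relatively
weak* open subset of `B_{X*}` has diameter 2. -/
def WStarDiameterTwoProp (X : Type*) [NormedAddCommGroup X] [NormedSpace ℝ X] : Prop :=
  ∀ U : Set (WeakDual ℝ X), IsOpen U →
    {f : X →L[ℝ] ℝ | ‖f‖ ≤ 1 ∧ StrongDual.toWeakDual f ∈ U}.Nonempty →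
    Metric.diam {f : X →L[ℝ] ℝ | ‖f‖ ≤ 1 ∧ StrongDual.toWeakDual f ∈ U} = 2

/-- The dual of `X` has the weak* strong diameter 2 property if every convex
combination of weak* slices of `B_{X*}` has diameter 2. -/
def WStarStrongDiameterTwoProp (X : Type*) [NormedAddCommGroup X] [NormedSpace ℝ X] : Prop :=
  ∀ (n : ℕ) (lam : Fin n → ℝ) (x : Fin n → X) (α : Fin n → ℝ),
    (∀ i, 0 ≤ lam i) → (∑ i, lam i) = 1 → (∀ i, ‖x i‖ = 1) → (∀ i, 0 < α i) →
    Metric.diam {f : X →L[ℝ] ℝ | ∃ g : Fin n → (X →L[ℝ] ℝ),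
      (∀ i, ‖g i‖ ≤ 1 ∧ 1 - α i < g i (x i)) ∧ f = ∑ i, lam i • g i} = 2

/-- `X` is locally octahedral. -/
def LocallyOctahedral (X : Type*) [NormedAddCommGroup X] [NormedSpace ℝ X] : Prop :=
  ∀ x : X, ∀ ε : ℝ, 0 < ε → ∃ y : X, ‖y‖ = 1 ∧
    ∀ s : ℝ, (1 - ε) * (|s| * ‖x‖ + ‖y‖) ≤ ‖s • x + y‖

/-- `X` is weakly octahedral. -/
def WeaklyOctahedral (X : Type*) [NormedAddCommGroup X] [NormedSpace ℝ X] : Prop :=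
  ∀ E : Subspace ℝ X, FiniteDimensional ℝ E → ∀ f : X →L[ℝ] ℝ, ‖f‖ ≤ 1 →
    ∀ ε : ℝ, 0 < ε → ∃ y : X, ‖y‖ = 1 ∧
      ∀ x ∈ E, (1 - ε) * (|f x| + ‖y‖) ≤ ‖x + y‖

/-- The norm on `X` is octahedral. -/
def Octahedral (X : Type*) [NormedAddCommGroup X] [NormedSpace ℝ X] : Prop :=
  ∀ E : Subspace ℝ X, FiniteDimensional ℝ E → ∀ ε : ℝ, 0 < ε →
    ∃ y : X, ‖y‖ = 1 ∧ ∀ x ∈ E, (1 - ε) * (‖x‖ + ‖y‖) ≤ ‖x + y‖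


/-! If `X` has the diameter 2 property, let `s ⊆ X*` be finite and `F ∈ B_{X**}`. By Goldstine's
theorem some `x₀ ∈ B_X` agrees with `F` on `s` up to `δ`; the weak neighbourhood of `x₀` cut out
by `s` contains `u, v ∈ B_X` with `‖u - v‖ > 2 - δ`, and a norming functional `g` of `u - v` has
`‖k + g‖ ≥ (k + g) u ≈ F k + 1` and `‖k + g‖ ≥ -(k + g) v ≈ 1 - F k` for `k ∈ s`. Taking for `s`
a net of a bounded part of a finite-dimensional `E ⊆ X*` gives weak octahedrality.

Conversely, let a weak neighbourhood of `x₀ ∈ B_X` be cut out by a finite `I ⊆ X*`. Weak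
octahedrality at `E = span I` and `F = x₀` gives `y ∈ S_{X*}` with
`(1 - ε) (|f x₀| + |t|) ≤ ‖f + t y‖` on `E`, which is exactly the condition of Helly's lemma for
finding `z ∈ B_X` with `f z ≈ (1 - ε) f x₀` on `I` and `y z ≈ ±(1 - ε)`; two such points are
almost `2` apart. -/

open Filter Topology

theorem Metric.exists_lt_dist_of_lt_diam {α : Type*} [PseudoMetricSpace α] {s : Set α} {r : ℝ}
    (hr : 0 ≤ r) (h : r < diam s) : ∃ x ∈ s, ∃ y ∈ s, r < dist x y := by
  by_contra! hs
  exact (diam_le_of_forall_dist_le hr hs).not_gt h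

theorem Metric.diam_eq_of_forall_lt_dist {α : Type*} [PseudoMetricSpace α] {s : Set α} {d : ℝ}
    (hd : ∀ x ∈ s, ∀ y ∈ s, dist x y ≤ d) (h : ∀ η > 0, ∃ x ∈ s, ∃ y ∈ s, d - η < dist x y) :
    diam s = d := by
  obtain ⟨x, hx, -⟩ := h 1 one_pos
  refine le_antisymm (diam_le_of_forall_dist_le (dist_self x ▸ hd x hx x hx) hd) ?_
  refine le_of_forall_pos_lt_add fun η hη => ?_
  obtain ⟨x, hx, y, hy, hxy⟩ := h η hη
  have := dist_le_diam_of_mem (isBounded_iff.2 ⟨d, hd⟩) hx hy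
  linarith

theorem le_norm_add_smul_of_le_norm_add {Z : Type*} [NormedAddCommGroup Z] [NormedSpace ℝ Z]
    {E : Submodule ℝ Z} {F : StrongDual ℝ Z} {y : Z} {c : ℝ}
    (h : ∀ x ∈ E, c * (|F x| + ‖y‖) ≤ ‖x + y‖) {x : Z} (hx : x ∈ E) (t : ℝ) :
    c * (|F x| + ‖t • y‖) ≤ ‖x + t • y‖ := by
  have hclosed : IsClosed {t : ℝ | c * (|F x| + ‖t • y‖) ≤ ‖x + t • y‖} :=
    isClosed_le (by fun_prop) (by fun_prop)
  suffices {(0 : ℝ)}ᶜ ⊆ {t : ℝ | c * (|F x| + ‖t • y‖) ≤ ‖x + t • y‖} by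
    exact hclosed.closure_subset_iff.2 this
      ((dense_compl_singleton (0 : ℝ)).closure_eq ▸ mem_univ t)
  intro t (ht : t ≠ 0)
  have := mul_le_mul_of_nonneg_left (h (t⁻¹ • x) (E.smul_mem _ hx)) (abs_nonneg t)
  rw [← Real.norm_eq_abs, ← norm_smul, smul_add, smul_inv_smul₀ ht, map_smul, smul_eq_mul,
    abs_mul, Real.norm_eq_abs] at this
  calc c * (|F x| + ‖t • y‖) = |t| * (c * (|t⁻¹| * |F x| + ‖y‖)) := by
        rw [norm_smul, Real.norm_eq_abs, abs_inv]
        field_simp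
    _ ≤ ‖x + t • y‖ := this

theorem WeaklyOctahedral.of_forall_finset {Z : Type*} [NormedAddCommGroup Z] [NormedSpace ℝ Z]
    (h : ∀ F : StrongDual ℝ Z, ‖F‖ ≤ 1 → ∀ (s : Finset Z) (δ : ℝ), 0 < δ →
      ∃ g : Z, ‖g‖ = 1 ∧ ∀ k ∈ s, |F k| + 1 - δ ≤ ‖k + g‖) :
    WeaklyOctahedral Z := by
  classical
  intro E hE F hF ε hε
  obtain ⟨t, -, ht, hcover⟩ :=
    finite_cover_balls_of_compact (isCompact_closedBall (0 : E) (2 / ε)) (by positivity : 0 < ε / 3)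
  obtain ⟨g, hg, hgt⟩ := h F hF (ht.toFinset.image Subtype.val) (ε / 3) (by positivity)
  refine ⟨g, hg, fun x hx => ?_⟩
  have hF' : ∀ x, |F x| ≤ ‖x‖ := fun x =>
    (F.le_opNorm x).trans (mul_le_of_le_one_left (norm_nonneg _) hF)
  rw [hg]
  rcases le_or_gt ‖x‖ (2 / ε) with hxR | hxR
  · obtain ⟨k, hk, hxk⟩ : ∃ k ∈ t, dist (⟨x, hx⟩ : E) k < ε / 3 := by
      simpa using hcover (mem_closedBall_zero_iff.2 hxR)
    have hkg := hgt k (Finset.mem_image_of_mem _ (ht.mem_toFinset.2 hk))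
    rw [Subtype.dist_eq, dist_eq_norm] at hxk
    have hFx : |F x| ≤ |F k| + ‖x - k‖ := by
      have := hF' (x - k)
      rw [map_sub] at this
      linarith [abs_sub_abs_le_abs_sub (F x) (F k)]
    have hxg : ‖(k : Z) + g‖ ≤ ‖x + g‖ + ‖x - k‖ := by
      calc ‖(k : Z) + g‖ = ‖(x + g) - (x - k)‖ := by congr 1; abel
        _ ≤ ‖x + g‖ + ‖x - k‖ := norm_sub_le _ _
    nlinarith [mul_nonneg hε.le (abs_nonneg (F x))]
  · have hxg : ‖x‖ - 1 ≤ ‖x + g‖ := by simpa [hg] using norm_sub_norm_le x (-g)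
    have hεx : 2 < ε * ‖x‖ := by rwa [div_lt_iff₀' hε] at hxR
    rcases le_or_gt ε 1 with hε1 | hε1
    · nlinarith [hF' x]
    · nlinarith [abs_nonneg (F x), norm_nonneg (x + g)]

section

variable {X : Type*} [NormedAddCommGroup X] [NormedSpace ℝ X]

theorem mem_closure_image_closedBall_of_abs_sum_le {ι : Type*} [Fintype ι]
    (φ : ι → StrongDual ℝ X) (p : ι → ℝ)
    (hp : ∀ a : ι → ℝ, |∑ i, a i * p i| ≤ ‖∑ i, a i • φ i‖) :
    p ∈ closure (ContinuousLinearMap.pi φ '' closedBall (0 : X) 1) := by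
  classical
  by_contra hp'
  obtain ⟨h, u, hlt, hu⟩ := geometric_hahn_banach_closed_point
    ((convex_closedBall (0 : X) 1).linear_image (ContinuousLinearMap.pi φ).toLinearMap).closure
    isClosed_closure hp'
  set a : ι → ℝ := fun i => h fun j => if i = j then 1 else 0
  have hh : ∀ q, h q = ∑ i, a i * q i := fun q => by
    simpa [mul_comm] using LinearMap.pi_apply_eq_sum_univ h.toLinearMap q
  set g := ∑ i, a i • φ i
  have hg : ∀ x ∈ closedBall (0 : X) 1, g x < u := fun x hx => by
    convert hlt _ (subset_closure (mem_image_of_mem _ hx)) using 1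
    simp [g, hh, mul_comm]
  have hu0 : 0 < u := by simpa using hg 0 (mem_closedBall_self zero_le_one)
  have hgu : ‖g‖ ≤ u := by
    refine g.opNorm_le_of_unit_norm hu0.le fun x hx => ?_
    have h1 := hg x (mem_closedBall_zero_iff.2 hx.le)
    have h2 := hg (-x) (mem_closedBall_zero_iff.2 (by rw [norm_neg, hx]))
    rw [map_neg] at h2
    exact abs_le.2 ⟨by linarith, h1.le⟩
  have := hp a
  rw [← hh] at this
  linarith [le_abs_self (h p)]

theorem exists_norm_le_one_forall_abs_apply_sub_lt {ι : Type*} [Fintype ι]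
    (φ : ι → StrongDual ℝ X) (p : ι → ℝ)
    (hp : ∀ a : ι → ℝ, |∑ i, a i * p i| ≤ ‖∑ i, a i • φ i‖) {δ : ℝ} (hδ : 0 < δ) :
    ∃ x : X, ‖x‖ ≤ 1 ∧ ∀ i, |φ i x - p i| < δ := by
  obtain ⟨_, ⟨x, hx, rfl⟩, hxp⟩ :=
    Metric.mem_closure_iff.1 (mem_closure_image_closedBall_of_abs_sum_le φ p hp) δ hδ
  refine ⟨x, mem_closedBall_zero_iff.1 hx, fun i => ?_⟩
  rw [abs_sub_comm, ← Real.dist_eq]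
  exact (dist_le_pi_dist _ _ i).trans_lt hxp

theorem exists_norm_le_one_forall_abs_apply_sub_bidual_lt {ι : Type*} [Fintype ι]
    (φ : ι → StrongDual ℝ X) {F : StrongDual ℝ (StrongDual ℝ X)} (hF : ‖F‖ ≤ 1)
    {δ : ℝ} (hδ : 0 < δ) : ∃ x : X, ‖x‖ ≤ 1 ∧ ∀ i, |φ i x - F (φ i)| < δ := by
  refine exists_norm_le_one_forall_abs_apply_sub_lt φ _ (fun a => ?_) hδ
  calc |∑ i, a i * F (φ i)| = |F (∑ i, a i • φ i)| := by simp
    _ ≤ ‖∑ i, a i • φ i‖ := (F.le_opNorm _).trans (mul_le_of_le_one_left (norm_nonneg _) hF)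

theorem exists_norm_le_one_abs_sub_lt_of_le_norm_add {I : Finset (StrongDual ℝ X)} {x₀ : X}
    {y : StrongDual ℝ X} {c : ℝ} (hc : 0 ≤ c) (hy : ‖y‖ = 1)
    (h : ∀ f ∈ Submodule.span ℝ (I : Set (StrongDual ℝ X)), c * (|f x₀| + ‖y‖) ≤ ‖f + y‖)
    {τ : ℝ} (hτ : |τ| ≤ 1) {δ : ℝ} (hδ : 0 < δ) :
    ∃ z : X, ‖z‖ ≤ 1 ∧ (∀ f ∈ I, |f z - c * f x₀| < δ) ∧ |y z - c * τ| < δ := by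
  set φ : Option I → StrongDual ℝ X := fun o => o.elim y Subtype.val
  set p : Option I → ℝ := fun o => c * o.elim τ fun f => f.1 x₀
  have hp : ∀ a : Option I → ℝ, |∑ o, a o * p o| ≤ ‖∑ o, a o • φ o‖ := by
    intro a
    set f := ∑ k : I, a (some k) • k.1
    have hf : f ∈ Submodule.span ℝ (I : Set (StrongDual ℝ X)) :=
      Submodule.sum_mem _ fun k _ => Submodule.smul_mem _ _ (Submodule.subset_span k.2)
    have hfy := le_norm_add_smul_of_le_norm_add (F := NormedSpace.inclusionInDoubleDual ℝ X x₀) h hf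
      (a none)
    rw [norm_smul, hy, mul_one, Real.norm_eq_abs] at hfy
    have hsum : ∑ o, a o * p o = c * (f x₀ + a none * τ) := by
      simp only [p, f, Fintype.sum_option, Option.elim_none, Option.elim_some, sum_apply,
        smul_apply, smul_eq_mul, mul_left_comm]
      rw [mul_add, Finset.mul_sum, add_comm]
    have hnorm : ∑ o, a o • φ o = f + a none • y := by
      simp [Fintype.sum_option, φ, f, add_comm]
    rw [hsum, hnorm, abs_mul, abs_of_nonneg hc]
    refine le_trans (mul_le_mul_of_nonneg_left ?_ hc) hfy
    refine (abs_add_le _ _).trans (add_le_add le_rfl ?_)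
    rw [abs_mul]
    exact mul_le_of_le_one_right (abs_nonneg _) hτ
  obtain ⟨z, hz, hzφ⟩ := exists_norm_le_one_forall_abs_apply_sub_lt φ p hp hδ
  exact ⟨z, hz, fun f hf => hzφ (some ⟨f, hf⟩), hzφ none⟩

theorem WeakSpace.exists_finset_of_mem_nhds {U : Set (WeakSpace ℝ X)} {x₀ : X}
    (hU : U ∈ 𝓝 (toWeakSpace ℝ X x₀)) :
    ∃ (I : Finset (StrongDual ℝ X)) (δ : ℝ), 0 < δ ∧
      ∀ x : X, (∀ f ∈ I, |f x - f x₀| < δ) → toWeakSpace ℝ X x ∈ U := by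
  have hU' : U ∈ comap (fun (w : WeakSpace ℝ X) (f : StrongDual ℝ X) => f w) (𝓝 fun f => f x₀) :=
    nhds_induced (fun (w : WeakSpace ℝ X) (f : StrongDual ℝ X) => f w) (toWeakSpace ℝ X x₀) ▸ hU
  rw [nhds_pi, Filter.mem_comap] at hU'
  obtain ⟨V, hV, hVU⟩ := hU'
  obtain ⟨I, t, ht, hIV⟩ := Filter.mem_pi'.1 hV
  have hball : ∀ᶠ δ in 𝓝[>] (0 : ℝ), ∀ f ∈ I, ball (f x₀) δ ⊆ t f :=
    (eventually_all_finset I).2 fun f _ => by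
      obtain ⟨ε, hε, hεt⟩ := Metric.mem_nhds_iff.1 (ht f)
      filter_upwards [Ioc_mem_nhdsGT hε] with δ hδ using (ball_subset_ball hδ.2).trans hεt
  obtain ⟨δ, hδI, hδ⟩ := (hball.and self_mem_nhdsWithin).exists
  refine ⟨I, δ, hδ, fun x hx => hVU (hIV fun f hf => hδI f hf ?_)⟩
  rw [mem_ball, Real.dist_eq]
  exact hx f hf

theorem DiameterTwoProp.exists_norm_eq_one_le_norm_add (hD : DiameterTwoProp X)
    {F : StrongDual ℝ (StrongDual ℝ X)} (hF : ‖F‖ ≤ 1) (s : Finset (StrongDual ℝ X)) {δ : ℝ}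
    (hδ : 0 < δ) : ∃ g : StrongDual ℝ X, ‖g‖ = 1 ∧ ∀ k ∈ s, |F k| + 1 - δ ≤ ‖k + g‖ := by
  obtain ⟨η, hη, hηδ, hη1⟩ : ∃ η : ℝ, 0 < η ∧ 3 * η ≤ δ ∧ 3 * η ≤ 1 :=
    ⟨min δ 1 / 3, by positivity, by linarith [min_le_left δ 1], by linarith [min_le_right δ 1]⟩
  obtain ⟨x₀, hx₀, hx₀s⟩ :=
    exists_norm_le_one_forall_abs_apply_sub_bidual_lt (Subtype.val : s → _) hF hη
  set U : Set (WeakSpace ℝ X) :=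
    ⋂ k ∈ s, {w | |(topDualPairing ℝ X).flip w k - k x₀| < η}
  have hU : IsOpen U := isOpen_biInter_finset fun k _ =>
    isOpen_lt ((WeakBilin.eval_continuous _ k).sub continuous_const).abs continuous_const
  have hmemU : ∀ x : X, toWeakSpace ℝ X x ∈ U ↔ ∀ k ∈ s, |k x - k x₀| < η := by
    intro x
    simp only [U, mem_iInter, mem_ofPred_eq]
    rfl
  have hS : {x : X | ‖x‖ ≤ 1 ∧ toWeakSpace ℝ X x ∈ U}.Nonempty :=
    ⟨x₀, hx₀, (hmemU x₀).2 fun k _ => by simpa using hη⟩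
  obtain ⟨u, ⟨hu, huU⟩, v, ⟨hv, hvU⟩, huv⟩ :=
    Metric.exists_lt_dist_of_lt_diam (r := 2 - η) (by linarith) (by rw [hD U hU hS]; linarith)
  rw [dist_eq_norm] at huv
  obtain ⟨g, hg, hguv⟩ := exists_dual_vector ℝ (u - v) (by linarith)
  replace hguv : g u - g v = ‖u - v‖ := by rw [← map_sub]; exact_mod_cast hguv
  have hgu := abs_le.1 (g.unit_le_opNorm u hu |>.trans_eq hg)
  have hgv := abs_le.1 (g.unit_le_opNorm v hv |>.trans_eq hg)
  refine ⟨g, hg, fun k hk => ?_⟩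
  have hku := abs_lt.1 ((hmemU u).1 huU k hk)
  have hkv := abs_lt.1 ((hmemU v).1 hvU k hk)
  have hk₀ := abs_lt.1 (hx₀s ⟨k, hk⟩ : |k x₀ - F k| < η)
  have hkgu := abs_le.1 ((k + g).unit_le_opNorm u hu)
  have hkgv := abs_le.1 ((k + g).unit_le_opNorm v hv)
  simp only [add_apply] at hkgu hkgv
  rcases abs_cases (F k) with ⟨hFk, -⟩ | ⟨hFk, -⟩ <;> rw [hFk] <;> linarith

theorem DiameterTwoProp.of_weaklyOctahedral_dual (hW : WeaklyOctahedral (StrongDual ℝ X)) :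
    DiameterTwoProp X := by
  rintro U hU ⟨x₀, hx₀, hx₀U⟩
  obtain ⟨I, δ, hδ, hIU⟩ := WeakSpace.exists_finset_of_mem_nhds (hU.mem_nhds hx₀U)
  refine Metric.diam_eq_of_forall_lt_dist (fun u hu v hv => ?_) fun η hη => ?_
  · exact (dist_le_norm_add_norm u v).trans (by linarith [hu.1, hv.1])
  have hsmall : ∀ᶠ ε in 𝓝[>] (0 : ℝ), (∀ k ∈ I, ε * |k x₀| < δ / 2) ∧ ε < min (η / 4) 1 := by
    refine .and ((eventually_all_finset I).2 fun k _ => ?_) ?_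
    · exact (((continuous_mul_const _).tendsto' 0 0 (zero_mul _)).mono_left
        nhdsWithin_le_nhds).eventually (gt_mem_nhds (half_pos hδ))
    · exact (eventually_lt_nhds (by positivity)).filter_mono nhdsWithin_le_nhds
  obtain ⟨ε, ⟨hεI, hεη⟩, hε⟩ := (hsmall.and self_mem_nhdsWithin).exists
  obtain ⟨y, hy, hyE⟩ := hW (Submodule.span ℝ I) inferInstance
    (NormedSpace.inclusionInDoubleDual ℝ X x₀) ((NormedSpace.double_dual_bound ℝ X x₀).trans hx₀)
    ε hε
  have hpoint : ∀ τ : ℝ, |τ| ≤ 1 → ∃ z ∈ {x : X | ‖x‖ ≤ 1 ∧ toWeakSpace ℝ X x ∈ U},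
      |y z - (1 - ε) * τ| < η / 4 := by
    intro τ hτ
    obtain ⟨z, hz, hzI, hzy⟩ := exists_norm_le_one_abs_sub_lt_of_le_norm_add
      (sub_nonneg.2 (hεη.trans_le (min_le_right _ _)).le) hy hyE hτ
      (lt_min (half_pos hδ) (by positivity : 0 < η / 4))
    refine ⟨z, ⟨hz, hIU z fun k hk => ?_⟩, hzy.trans_le (min_le_right _ _)⟩
    calc |k z - k x₀| = |(k z - (1 - ε) * k x₀) - ε * k x₀| := by ring_nf
      _ ≤ |k z - (1 - ε) * k x₀| + ε * |k x₀| := by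
          rw [← abs_of_pos hε, ← abs_mul, abs_of_pos hε]; exact abs_sub _ _
      _ < δ / 2 + δ / 2 := add_lt_add ((hzI k hk).trans_le (min_le_left _ _)) (hεI k hk)
      _ = δ := add_halves δ
  obtain ⟨u, hu, hyu⟩ := hpoint 1 (by simp)
  obtain ⟨v, hv, hyv⟩ := hpoint (-1) (by simp)
  refine ⟨u, hu, v, hv, ?_⟩
  have hε' : ε < η / 4 := hεη.trans_le (min_le_left _ _)
  have hyuv : y u - y v ≤ dist u v := by
    rw [dist_eq_norm, ← map_sub]
    exact (le_abs_self _).trans ((y.le_opNorm _).trans_eq (by rw [hy, one_mul]))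
  linarith [abs_lt.1 hyu, abs_lt.1 hyv]

end

theorem stmt_8_general (X : Type*) [NormedAddCommGroup X] [NormedSpace ℝ X] :
    DiameterTwoProp X ↔ WeaklyOctahedral (StrongDual ℝ X) :=
  ⟨fun hD => WeaklyOctahedral.of_forall_finset fun _ hF s _ hδ =>
    hD.exists_norm_eq_one_le_norm_add hF s hδ, DiameterTwoProp.of_weaklyOctahedral_dual⟩

theorem stmt_8 (X : Type*) [NormedAddCommGroup X] [NormedSpace ℝ X] [CompleteSpace X] [Nontrivial X] :
    DiameterTwoProp X ↔ WeaklyOctahedral (StrongDual ℝ X) :=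
  stmt_8_general X
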